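/- Iterating the modification that decreases one endpoint by ε/2 and increases the other by ε/4, alternating which endpoint is decreased, yields after 2n steps a model whose both endpoints equal the original values minus nε/4; hence both endpoints decrease without bound while every single step is ε-acceptable. -/

import Mathlib

/-! Each step adds a fixed increment whose entries are all at least `-ε` and one of which is
positive, so it is `ε`-acceptable. A double step adds `![-(ε / 2), ε / 4] + ![ε / 4, -(ε / 2)]
= ![-(ε / 4), -(ε / 4)]`, so after `n` double steps both endpoints have lost `n * ε / 4`. -/

def EpsAcceptable {ι : Type*} (ε : ℝ) (f f' : ι → ℝ) : Prop :=
  (∀ k, f k - ε ≤ f' k) ∧ ∃ k, f k < f' k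

lemma epsAcceptable_add_iff {ι : Type*} {ε : ℝ} {f d : ι → ℝ} :
    EpsAcceptable ε f (f + d) ↔ (∀ k, -ε ≤ d k) ∧ ∃ k, 0 < d k := by
  refine and_congr (forall_congr' fun k => ?_) (exists_congr fun k => ?_) <;>
    simp only [Pi.add_apply] <;> constructor <;> intro h <;> linarith

lemma epsAcceptable_add_vec_two {ε x y : ℝ} {f : Fin 2 → ℝ} (hx : -ε ≤ x) (hy : -ε ≤ y)
    (hpos : 0 < x ∨ 0 < y) : EpsAcceptable ε f (f + ![x, y]) :=
  epsAcceptable_add_iff.2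
    ⟨Fin.forall_fin_two.2 ⟨hx, hy⟩, Fin.exists_fin_two.2 hpos⟩

lemma eq_add_nsmul_of_alternating_steps {M : Type*} [AddMonoid M] {v : ℕ → M} {d e : M}
    (hodd : ∀ i, v (2 * i + 1) = v (2 * i) + d) (heven : ∀ i, v (2 * i + 2) = v (2 * i + 1) + e)
    (n : ℕ) : v (2 * n) = v 0 + n • (d + e) := by
  induction n with
  | zero => simp
  | succ n ih => rw [Nat.mul_succ, heven, hodd, ih, succ_nsmul, add_assoc, add_assoc]

/-- Alternating modifications that decrease one endpoint by `ε/2` and increase the other by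
`ε/4`: every single step is `ε`-acceptable, yet after `2n` steps both endpoints equal the
original values minus `n * ε / 4`, so performance decreases without bound. -/
theorem alternating_biocreep
    (ε a b : ℝ) (hε : 0 < ε) (v : ℕ → Fin 2 → ℝ)
    (h0 : v 0 = ![a, b])
    (hodd : ∀ i : ℕ, v (2 * i + 1) = v (2 * i) + ![-(ε / 2), ε / 4])
    (heven : ∀ i : ℕ, v (2 * i + 2) = v (2 * i + 1) + ![ε / 4, -(ε / 2)]) :
    (∀ i : ℕ,
      ((∀ k, v (2 * i) k - ε ≤ v (2 * i + 1) k) ∧ (∃ k, v (2 * i) k < v (2 * i + 1) k)) ∧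
      ((∀ k, v (2 * i + 1) k - ε ≤ v (2 * i + 2) k) ∧
        (∃ k, v (2 * i + 1) k < v (2 * i + 2) k))) ∧
    (∀ n : ℕ, v (2 * n) = ![a - n * ε / 4, b - n * ε / 4]) := by
  refine ⟨fun i => ⟨?_, ?_⟩, fun n => ?_⟩
  · change EpsAcceptable ε _ _
    rw [hodd i]
    exact epsAcceptable_add_vec_two (by linarith) (by linarith) (Or.inr (by positivity))
  · change EpsAcceptable ε _ _
    rw [heven i]
    exact epsAcceptable_add_vec_two (by linarith) (by linarith) (Or.inl (by positivity))
  · rw [eq_add_nsmul_of_alternating_steps hodd heven, h0]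
    ext k
    fin_cases k <;>
      simp only [Fin.zero_eta, Fin.mk_one, nsmul_eq_mul, Pi.add_apply, Pi.mul_apply, Pi.natCast_apply,
        Matrix.cons_val_zero, Matrix.cons_val_one, Matrix.cons_val_fin_one] <;> ring
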